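/- arXiv:1801.01290 — 5 statements merged into one kernel-verified Lean document; each statement's English description precedes it below -/
import Mathlib

section
/- Gibbs variational principle: let A be a nonempty finite type and f : A → ℝ. For every probability mass function μ on A, ∑_a μ(a) · log μ(a) − ∑_a μ(a) · f(a) ≥ −log(∑_a exp(f(a))) (with the convention 0 · log 0 = 0), and equality holds if and only if μ(a) = exp(f(a)) / ∑_{a'} exp(f(a')) for all a. In particular, the Boltzmann distribution proportional to exp(f) is the unique minimizer of μ ↦ ∑_a μ(a)·(log μ(a) − f(a)) over all probability mass functions on A. -/
lemma gibbs_point (p q : ℝ) (hp : 0 ≤ p) (hq : 0 < q) :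
    p - q ≤ p * Real.log p - p * Real.log q ∧
      (p ≠ q → p - q < p * Real.log p - p * Real.log q) := by
  rcases hp.eq_or_lt with h | h
  · subst h
    simp only [Real.log_zero, mul_zero, zero_mul, sub_zero, zero_sub]
    constructor
    · linarith
    · intro _; linarith
  · have hqp : 0 < q / p := div_pos hq h
    have hle : Real.log (q / p) ≤ q / p - 1 := Real.log_le_sub_one_of_pos hqp
    have hdiv : Real.log (q / p) = Real.log q - Real.log p :=
      Real.log_div hq.ne' h.ne'
    have hmul : p * (q / p) = q := by field_simp
    constructor
    · nlinarith [mul_le_mul_of_nonneg_left hle h.le]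
    · intro hne
      have hne1 : q / p ≠ 1 := by
        intro hc
        apply hne
        field_simp at hc
        linarith
      have hlt : Real.log (q / p) < q / p - 1 :=
        (Real.log_lt_sub_one_of_pos hqp hne1)
      nlinarith [mul_lt_mul_of_pos_left hlt h]

theorem gibbs_variational_principle
    {A : Type*} [Fintype A] [Nonempty A] (f : A → ℝ)
    (μ : A → ℝ) (h0 : ∀ a, 0 ≤ μ a) (h1 : ∑ a, μ a = 1) :
    ((∑ a, μ a * Real.log (μ a)) - (∑ a, μ a * f a)
        ≥ -Real.log (∑ a, Real.exp (f a)))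
    ∧ ((∑ a, μ a * Real.log (μ a)) - (∑ a, μ a * f a)
          = -Real.log (∑ a, Real.exp (f a))
        ↔ ∀ a, μ a = Real.exp (f a) / ∑ a', Real.exp (f a')) := by
  set Z : ℝ := ∑ a, Real.exp (f a) with hZ
  have hZpos : 0 < Z := Finset.sum_pos (fun a _ => Real.exp_pos _) Finset.univ_nonempty
  set ν : A → ℝ := fun a => Real.exp (f a) / Z with hν
  have hνpos : ∀ a, 0 < ν a := fun a => div_pos (Real.exp_pos _) hZpos
  have hνsum : ∑ a, ν a = 1 := by
    rw [hν]
    rw [← Finset.sum_div]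
    field_simp
    exact hZ.symm
  have hlogν : ∀ a, Real.log (ν a) = f a - Real.log Z := fun a => by
    rw [hν, Real.log_div (Real.exp_pos _).ne' hZpos.ne', Real.log_exp]
  -- key: ∑ (μ a * log (μ a) - μ a * log (ν a)) = LHS + log Z
  have hrw : ∑ a, (μ a * Real.log (μ a) - μ a * Real.log (ν a))
      = ((∑ a, μ a * Real.log (μ a)) - (∑ a, μ a * f a)) + Real.log Z := by
    rw [Finset.sum_sub_distrib]
    have : ∑ a, μ a * Real.log (ν a) = (∑ a, μ a * f a) - Real.log Z := by
      calc ∑ a, μ a * Real.log (ν a) = ∑ a, (μ a * f a - μ a * Real.log Z) := by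
            refine Finset.sum_congr rfl fun a _ => ?_
            rw [hlogν a]; ring
        _ = (∑ a, μ a * f a) - Real.log Z := by
            rw [Finset.sum_sub_distrib, ← Finset.sum_mul, h1, one_mul]
    rw [this]; ring
  have hpt : ∀ a ∈ Finset.univ, μ a - ν a ≤ μ a * Real.log (μ a) - μ a * Real.log (ν a) :=
    fun a _ => (gibbs_point (μ a) (ν a) (h0 a) (hνpos a)).1
  have hsum0 : ∑ a, (μ a - ν a) = 0 := by
    rw [Finset.sum_sub_distrib, h1, hνsum]; ring
  have hge : ∑ a, (μ a * Real.log (μ a) - μ a * Real.log (ν a)) ≥ 0 := by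
    calc ∑ a, (μ a * Real.log (μ a) - μ a * Real.log (ν a))
        ≥ ∑ a, (μ a - ν a) := Finset.sum_le_sum hpt
      _ = 0 := hsum0
  constructor
  · linarith [hrw ▸ hge]
  · constructor
    · intro heq
      by_contra hc
      push_neg at hc
      obtain ⟨a₀, ha₀⟩ := hc
      have hstrict : ∑ a, (μ a - ν a)
          < ∑ a, (μ a * Real.log (μ a) - μ a * Real.log (ν a)) := by
        refine Finset.sum_lt_sum hpt ⟨a₀, Finset.mem_univ a₀, ?_⟩
        exact (gibbs_point (μ a₀) (ν a₀) (h0 a₀) (hνpos a₀)).2 ha₀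
      rw [hsum0, hrw] at hstrict
      linarith
    · intro hμν
      have : ∑ a, μ a * Real.log (μ a) = (∑ a, μ a * f a) - Real.log Z := by
        calc ∑ a, μ a * Real.log (μ a) = ∑ a, (μ a * f a - μ a * Real.log Z) := by
              refine Finset.sum_congr rfl fun a _ => ?_
              have : Real.log (μ a) = f a - Real.log Z := by rw [hμν a, ← hlogν a]
              rw [this]; ring
          _ = (∑ a, μ a * f a) - Real.log Z := by
              rw [Finset.sum_sub_distrib, ← Finset.sum_mul, h1, one_mul]
      rw [this]; ring
end

section
/- (Soft Policy Improvement, Lemma 2.) Let π_old and π_new be policies and let Q^{π_old}, Q^{π_new} be the unique fixed points of T^{π_old}, T^{π_new} respectively. Suppose that for every state s, −H(π_new(s)) − ∑_a π_new(s)(a) · Q^{π_old}(s,a) ≤ −H(π_old(s)) − ∑_a π_old(s)(a) · Q^{π_old}(s,a) (i.e., π_new does at least as well as π_old on the KL-projection objective against exp(Q^{π_old}(s,·))). Then Q^{π_new}(s,a) ≥ Q^{π_old}(s,a) for all (s,a) ∈ S × A. -/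
open Filter

noncomputable def entropy {A : Type*} [Fintype A] (μ : PMF A) : ℝ :=
  -∑ a, (μ a).toReal * Real.log (μ a).toReal

noncomputable def softV {S A : Type*} [Fintype A] (π : S → PMF A) (Q : S × A → ℝ) (s : S) : ℝ :=
  (∑ a, (π s a).toReal * Q (s, a)) + entropy (π s)

noncomputable def softBellman {S A : Type*} [Fintype S] [Fintype A]
    (p : S → A → PMF S) (r : S → A → ℝ) (γ : ℝ) (π : S → PMF A)
    (Q : S × A → ℝ) : S × A → ℝ :=
  fun sa => r sa.1 sa.2 + γ * ∑ s', (p sa.1 sa.2 s').toReal * softV π Q s'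

lemma pmf_sum_toReal_one {B : Type*} [Fintype B] (μ : PMF B) :
    ∑ b, (μ b).toReal = 1 := by
  have h : ∑' b, μ b = 1 := μ.tsum_coe
  rw [tsum_fintype] at h
  rw [← ENNReal.toReal_sum (fun b _ => PMF.apply_ne_top μ b)]
  rw [h]; rfl

theorem soft_policy_improvement
    {S A : Type*} [Fintype S] [Fintype A] [Nonempty S] [Nonempty A]
    (p : S → A → PMF S) (r : S → A → ℝ) (γ : ℝ) (hγ0 : 0 ≤ γ) (hγ1 : γ < 1)
    (πold πnew : S → PMF A) (Qold Qnew : S × A → ℝ)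
    (hfixold : ∀ sa, softBellman p r γ πold Qold sa = Qold sa)
    (hfixnew : ∀ sa, softBellman p r γ πnew Qnew sa = Qnew sa)
    (himp : ∀ s,
      -entropy (πnew s) - ∑ a, (πnew s a).toReal * Qold (s, a)
        ≤ -entropy (πold s) - ∑ a, (πold s a).toReal * Qold (s, a)) :
    ∀ sa, Qold sa ≤ Qnew sa := by
  classical
  set f : S × A → ℝ := fun sa => Qold sa - Qnew sa with hf
  set M : ℝ := Finset.univ.sup' Finset.univ_nonempty f with hMdef
  have hle : ∀ sa, f sa ≤ M := fun sa => Finset.le_sup' f (Finset.mem_univ sa)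
  -- Step 1: Qold ≤ T^{πnew} Qold
  have key : ∀ sa, Qold sa ≤ softBellman p r γ πnew Qold sa := by
    intro sa
    rw [← hfixold sa]
    unfold softBellman
    have hV : ∀ s', softV πold Qold s' ≤ softV πnew Qold s' := by
      intro s'
      have := himp s'
      unfold softV
      linarith
    gcongr (r sa.1 sa.2 + γ * ∑ s', (p sa.1 sa.2 s').toReal * ?_) with s' _
    exact hV s'
  -- Step 2: M ≤ γ * M
  obtain ⟨sa0, -, hM0⟩ := Finset.exists_mem_eq_sup' Finset.univ_nonempty f
  have hcontr : M ≤ γ * M := by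
    have h1 : f sa0 ≤ softBellman p r γ πnew Qold sa0 - softBellman p r γ πnew Qnew sa0 := by
      have := key sa0
      have := hfixnew sa0
      simp only [hf]
      linarith
    have h2 : softBellman p r γ πnew Qold sa0 - softBellman p r γ πnew Qnew sa0
        = γ * ∑ s', (p sa0.1 sa0.2 s').toReal *
            (softV πnew Qold s' - softV πnew Qnew s') := by
      simp only [softBellman, mul_sub, Finset.sum_sub_distrib]
      ring
    have hVdiff : ∀ s', softV πnew Qold s' - softV πnew Qnew s' ≤ M := by
      intro s'
      have heq : softV πnew Qold s' - softV πnew Qnew s'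
          = ∑ a, (πnew s' a).toReal * f (s', a) := by
        simp only [softV, hf, mul_sub, Finset.sum_sub_distrib]
        ring
      rw [heq]
      calc ∑ a, (πnew s' a).toReal * f (s', a)
          ≤ ∑ a, (πnew s' a).toReal * M := by
            apply Finset.sum_le_sum
            intro a _
            exact mul_le_mul_of_nonneg_left (hle (s', a)) ENNReal.toReal_nonneg
        _ = M := by rw [← Finset.sum_mul, pmf_sum_toReal_one, one_mul]
    have h3 : ∑ s', (p sa0.1 sa0.2 s').toReal *
            (softV πnew Qold s' - softV πnew Qnew s') ≤ M := by
      calc ∑ s', (p sa0.1 sa0.2 s').toReal * (softV πnew Qold s' - softV πnew Qnew s')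
          ≤ ∑ s', (p sa0.1 sa0.2 s').toReal * M := by
            apply Finset.sum_le_sum
            intro s' _
            exact mul_le_mul_of_nonneg_left (hVdiff s') ENNReal.toReal_nonneg
        _ = M := by rw [← Finset.sum_mul, pmf_sum_toReal_one, one_mul]
    have h4 : γ * (∑ s', (p sa0.1 sa0.2 s').toReal *
        (softV πnew Qold s' - softV πnew Qnew s')) ≤ γ * M :=
      mul_le_mul_of_nonneg_left h3 hγ0
    calc M = f sa0 := hMdef.trans hM0
      _ ≤ _ := h1
      _ = _ := h2
      _ ≤ γ * M := h4
  have hM0' : M ≤ 0 := by nlinarith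
  intro sa
  have := hle sa
  simp only [hf] at this
  linarith
end

section
/- Monotone convergence of soft policy iteration: let (π_i)_{i∈ℕ} be a sequence of policies such that for every i and every state s, −H(π_{i+1}(s)) − ∑_a π_{i+1}(s)(a) · Q^{π_i}(s,a) ≤ −H(π_i(s)) − ∑_a π_i(s)(a) · Q^{π_i}(s,a). Then for every (s,a), the sequence i ↦ Q^{π_i}(s,a) is nondecreasing and bounded above by (R + γ · log |A|)/(1 − γ) with R = max_{(s,a)} |r(s,a)|, and hence converges. -/
open Filter

lemma pmf_sum_toReal {α : Type*} [Fintype α] (μ : PMF α) : ∑ a, (μ a).toReal = 1 := by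
  have h := μ.tsum_coe
  rw [tsum_fintype] at h
  rw [← ENNReal.toReal_sum (fun a _ => PMF.apply_ne_top μ a), h, ENNReal.toReal_one]

lemma abs_weighted_le {α : Type*} [Fintype α] (w d : α → ℝ) (C : ℝ)
    (hw0 : ∀ a, 0 ≤ w a) (hw1 : ∑ a, w a = 1) (hd : ∀ a, |d a| ≤ C) :
    |∑ a, w a * d a| ≤ C := by
  calc |∑ a, w a * d a| ≤ ∑ a, |w a * d a| := Finset.abs_sum_le_sum_abs _ _
    _ = ∑ a, w a * |d a| := by
        refine Finset.sum_congr rfl fun a _ => ?_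
        rw [abs_mul, abs_of_nonneg (hw0 a)]
    _ ≤ ∑ a, w a * C := Finset.sum_le_sum (fun a _ => mul_le_mul_of_nonneg_left (hd a) (hw0 a))
    _ = C := by rw [← Finset.sum_mul, hw1, one_mul]

lemma entropy_le_log_card {A : Type*} [Fintype A] [Nonempty A] (μ : PMF A) :
    entropy μ ≤ Real.log (Fintype.card A) := by
  have hn : (0:ℝ) < Fintype.card A := by exact_mod_cast Fintype.card_pos
  set n : ℝ := (Fintype.card A : ℝ) with hnn
  have key : ∀ a, -((μ a).toReal * Real.log (μ a).toReal)
      ≤ (μ a).toReal * Real.log n + (1/n - (μ a).toReal) := by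
    intro a
    set x := (μ a).toReal with hx
    rcases eq_or_lt_of_le (ENNReal.toReal_nonneg : (0:ℝ) ≤ x) with h0 | hxpos
    · rw [show x = 0 from h0.symm]; simp; positivity
    · have h2 : Real.log ((n * x)⁻¹) ≤ (n * x)⁻¹ - 1 :=
        Real.log_le_sub_one_of_pos (by positivity)
      have h1 : Real.log ((n * x)⁻¹) = -(Real.log n + Real.log x) := by
        rw [Real.log_inv, Real.log_mul (ne_of_gt hn) (ne_of_gt hxpos)]
      have h3 : x * (n * x)⁻¹ = 1/n := by
        field_simp
        exact mul_inv_cancel₀ (ne_of_gt hxpos)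
      nlinarith [mul_le_mul_of_nonneg_left h2 hxpos.le]
  calc entropy μ = ∑ a, -((μ a).toReal * Real.log (μ a).toReal) := by
        rw [entropy, ← Finset.sum_neg_distrib]
    _ ≤ ∑ a, ((μ a).toReal * Real.log n + (1/n - (μ a).toReal)) :=
        Finset.sum_le_sum (fun a _ => key a)
    _ = Real.log n := by
        rw [Finset.sum_add_distrib, Finset.sum_sub_distrib, ← Finset.sum_mul,
          pmf_sum_toReal, one_mul, Finset.sum_const, Finset.card_univ,
          nsmul_eq_mul]
        field_simp
        rw [← hnn]; ring

lemma bellman_mono {S A : Type*} [Fintype S] [Fintype A]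
    (p : S → A → PMF S) (r : S → A → ℝ) {γ : ℝ} (hγ0 : 0 ≤ γ) (π : S → PMF A)
    {Q Q' : S × A → ℝ} (h : ∀ sa, Q sa ≤ Q' sa) (sa : S × A) :
    softBellman p r γ π Q sa ≤ softBellman p r γ π Q' sa := by
  unfold softBellman
  have hV : ∀ s, softV π Q s ≤ softV π Q' s := by
    intro s
    unfold softV
    gcongr with a _
    exact h _
  gcongr with s' _
  exact hV s'

lemma bellman_contract {S A : Type*} [Fintype S] [Fintype A]
    (p : S → A → PMF S) (r : S → A → ℝ) {γ : ℝ} (hγ0 : 0 ≤ γ) (π : S → PMF A)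
    (Q Q' : S × A → ℝ) (C : ℝ) (hC : ∀ sa, |Q sa - Q' sa| ≤ C) (sa : S × A) :
    |softBellman p r γ π Q sa - softBellman p r γ π Q' sa| ≤ γ * C := by
  have hV : ∀ s, |softV π Q s - softV π Q' s| ≤ C := by
    intro s
    have hd : softV π Q s - softV π Q' s
        = ∑ a, (π s a).toReal * (Q (s, a) - Q' (s, a)) := by
      simp only [softV, mul_sub, Finset.sum_sub_distrib]
      ring
    rw [hd]
    exact abs_weighted_le _ _ C (fun a => ENNReal.toReal_nonneg) (pmf_sum_toReal _)
      (fun a => hC _)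
  have hd : softBellman p r γ π Q sa - softBellman p r γ π Q' sa
      = γ * ∑ s', (p sa.1 sa.2 s').toReal * (softV π Q s' - softV π Q' s') := by
    simp only [softBellman, mul_sub, Finset.sum_sub_distrib]
    ring
  rw [hd, abs_mul, abs_of_nonneg hγ0]
  exact mul_le_mul_of_nonneg_left
    (abs_weighted_le _ _ C (fun _ => ENNReal.toReal_nonneg) (pmf_sum_toReal _) hV) hγ0

theorem soft_policy_iteration_monotone_convergence
    {S A : Type*} [Fintype S] [Fintype A] [Nonempty S] [Nonempty A]
    (p : S → A → PMF S) (r : S → A → ℝ) (γ : ℝ) (hγ0 : 0 ≤ γ) (hγ1 : γ < 1)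
    (π : ℕ → S → PMF A) (Q : ℕ → S × A → ℝ)
    (hfix : ∀ i, ∀ sa, softBellman p r γ (π i) (Q i) sa = Q i sa)
    (himp : ∀ i, ∀ s,
      -entropy (π (i + 1) s) - ∑ a, (π (i + 1) s a).toReal * Q i (s, a)
        ≤ -entropy (π i s) - ∑ a, (π i s a).toReal * Q i (s, a)) :
    ∀ sa : S × A,
      Monotone (fun i => Q i sa)
      ∧ (∀ i, Q i sa
          ≤ ((⨆ sa' : S × A, |r sa'.1 sa'.2|) + γ * Real.log (Fintype.card A)) / (1 - γ))
      ∧ ∃ L : ℝ, Tendsto (fun i => Q i sa) atTop (nhds L) := by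
  have h1γ : (0:ℝ) < 1 - γ := by linarith
  set R := ⨆ sa' : S × A, |r sa'.1 sa'.2| with hRdef
  have hRle : ∀ sa : S × A, |r sa.1 sa.2| ≤ R :=
    fun sa => le_ciSup (f := fun sa' : S × A => |r sa'.1 sa'.2|) (Set.Finite.bddAbove (Set.finite_range _)) sa
  -- Upper bound
  have hbound : ∀ i (sa : S × A),
      Q i sa ≤ (R + γ * Real.log (Fintype.card A)) / (1 - γ) := by
    intro i sa
    obtain ⟨sa₀, hmax⟩ := Finite.exists_max (Q i)
    have hVle : ∀ s', softV (π i) (Q i) s' ≤ Q i sa₀ + Real.log (Fintype.card A) := by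
      intro s'
      have h1 : ∑ a, (π i s' a).toReal * Q i (s', a) ≤ Q i sa₀ := by
        calc ∑ a, (π i s' a).toReal * Q i (s', a)
            ≤ ∑ a, (π i s' a).toReal * Q i sa₀ :=
              Finset.sum_le_sum (fun a _ =>
                mul_le_mul_of_nonneg_left (hmax _) ENNReal.toReal_nonneg)
          _ = Q i sa₀ := by rw [← Finset.sum_mul, pmf_sum_toReal, one_mul]
      have h2 := entropy_le_log_card (π i s')
      unfold softV
      linarith
    have hsum : ∑ s', (p sa₀.1 sa₀.2 s').toReal * softV (π i) (Q i) s'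
        ≤ Q i sa₀ + Real.log (Fintype.card A) := by
      calc ∑ s', (p sa₀.1 sa₀.2 s').toReal * softV (π i) (Q i) s'
          ≤ ∑ s', (p sa₀.1 sa₀.2 s').toReal * (Q i sa₀ + Real.log (Fintype.card A)) :=
            Finset.sum_le_sum (fun s' _ =>
              mul_le_mul_of_nonneg_left (hVle s') ENNReal.toReal_nonneg)
        _ = Q i sa₀ + Real.log (Fintype.card A) := by
            rw [← Finset.sum_mul, pmf_sum_toReal, one_mul]
    have hr : r sa₀.1 sa₀.2 ≤ R := le_trans (le_abs_self _) (hRle sa₀)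
    have hfix0 := hfix i sa₀
    unfold softBellman at hfix0
    have hQ0 : Q i sa₀ * (1 - γ) ≤ R + γ * Real.log (Fintype.card A) := by
      nlinarith [mul_le_mul_of_nonneg_left hsum hγ0]
    have hb : Q i sa₀ ≤ (R + γ * Real.log (Fintype.card A)) / (1 - γ) := by
      rw [le_div_iff₀ h1γ]
      exact hQ0
    exact le_trans (hmax sa) hb
  -- Monotonicity
  have hstep : ∀ i (sa : S × A), Q i sa ≤ Q (i + 1) sa := by
    intro i sa
    set T := softBellman p r γ (π (i + 1)) with hT
    have hQleT : ∀ sa : S × A, Q i sa ≤ T (Q i) sa := by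
      intro sa
      have hv : ∀ s, softV (π i) (Q i) s ≤ softV (π (i + 1)) (Q i) s := by
        intro s
        have := himp i s
        unfold softV
        linarith
      have : softBellman p r γ (π i) (Q i) sa ≤ T (Q i) sa := by
        rw [hT]
        unfold softBellman
        gcongr with s' _
        exact hv s'
      rw [hfix i sa] at this
      exact this
    have hiter : ∀ n (sa : S × A), Q i sa ≤ T^[n] (Q i) sa := by
      intro n
      induction n with
      | zero => simp
      | succ n ih =>
        intro sa
        rw [Function.iterate_succ_apply']
        exact le_trans (hQleT sa) (bellman_mono p r hγ0 (π (i + 1)) ih sa)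
    obtain ⟨sa₁, hC⟩ := Finite.exists_max (fun sa => |Q i sa - Q (i + 1) sa|)
    set C := |Q i sa₁ - Q (i + 1) sa₁| with hCdef
    have hC0 : 0 ≤ C := abs_nonneg _
    have hcontr : ∀ n (sa : S × A), |T^[n] (Q i) sa - Q (i + 1) sa| ≤ γ ^ n * C := by
      intro n
      induction n with
      | zero => intro sa; simpa using hC sa
      | succ n ih =>
        intro sa
        rw [Function.iterate_succ_apply']
        have h1 : |T (T^[n] (Q i)) sa - T (Q (i + 1)) sa| ≤ γ * (γ ^ n * C) :=
          bellman_contract p r hγ0 (π (i + 1)) _ _ (γ ^ n * C) ih sa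
        have h2 : T (Q (i + 1)) sa = Q (i + 1) sa := hfix (i + 1) sa
        rw [h2] at h1
        calc |T (T^[n] (Q i)) sa - Q (i + 1) sa| ≤ γ * (γ ^ n * C) := h1
          _ = γ ^ (n + 1) * C := by ring
    have hle : ∀ n, Q i sa ≤ Q (i + 1) sa + γ ^ n * C := by
      intro n
      have h1 := hiter n sa
      have h2 := (abs_le.mp (hcontr n sa)).2
      linarith
    have htend : Tendsto (fun n : ℕ => Q (i + 1) sa + γ ^ n * C) atTop
        (nhds (Q (i + 1) sa)) := by
      have h0 : Tendsto (fun n : ℕ => γ ^ n) atTop (nhds 0) :=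
        tendsto_pow_atTop_nhds_zero_of_lt_one hγ0 hγ1
      have h1 : Tendsto (fun n : ℕ => Q (i + 1) sa + γ ^ n * C) atTop
          (nhds (Q (i + 1) sa + 0 * C)) := tendsto_const_nhds.add (h0.mul_const C)
      simpa using h1
    exact ge_of_tendsto' htend hle
  intro sa
  have hmono : Monotone fun i => Q i sa := monotone_nat_of_le_succ (fun i => hstep i sa)
  refine ⟨hmono, fun i => hbound i sa, ⟨⨆ i, Q i sa, ?_⟩⟩
  exact tendsto_atTop_ciSup hmono
    ⟨(R + γ * Real.log (Fintype.card A)) / (1 - γ), by rintro x ⟨i, rfl⟩; exact hbound i sa⟩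
end

section
/- (Optimality in soft policy iteration, Theorem 1.) Let Π be a set of policies and let π* ∈ Π satisfy, for every state s and every π ∈ Π, −H(π*(s)) − ∑_a π*(s)(a) · Q^{π*}(s,a) ≤ −H(π(s)) − ∑_a π(s)(a) · Q^{π*}(s,a) (i.e., π* is a fixed point of the soft policy improvement step over Π). Then Q^{π*}(s,a) ≥ Q^{π}(s,a) for every π ∈ Π and every (s,a) ∈ S × A. -/
open Filter

lemma pmf_weighted_le {α : Type*} [Fintype α] (μ : PMF α) (f : α → ℝ) (M : ℝ)
    (h : ∀ a, f a ≤ M) : ∑ a, (μ a).toReal * f a ≤ M := by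
  calc ∑ a, (μ a).toReal * f a
      ≤ ∑ a, (μ a).toReal * M :=
        Finset.sum_le_sum fun a _ =>
          mul_le_mul_of_nonneg_left (h a) ENNReal.toReal_nonneg
    _ = M := by rw [← Finset.sum_mul, pmf_sum_toReal, one_mul]

theorem soft_policy_iteration_optimality
    {S A : Type*} [Fintype S] [Fintype A] [Nonempty S] [Nonempty A]
    (p : S → A → PMF S) (r : S → A → ℝ) (γ : ℝ) (hγ0 : 0 ≤ γ) (hγ1 : γ < 1)
    (P : Set (S → PMF A)) (πstar : S → PMF A) (hmem : πstar ∈ P)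
    (Qstar : S × A → ℝ)
    (hfix : ∀ sa, softBellman p r γ πstar Qstar sa = Qstar sa)
    (hopt : ∀ s, ∀ π ∈ P,
      -entropy (πstar s) - ∑ a, (πstar s a).toReal * Qstar (s, a)
        ≤ -entropy (π s) - ∑ a, (π s a).toReal * Qstar (s, a)) :
    ∀ π ∈ P, ∀ Qπ : S × A → ℝ,
      (∀ sa, softBellman p r γ π Qπ sa = Qπ sa) →
      ∀ sa, Qπ sa ≤ Qstar sa := by
  intro π hπ Qπ hfixπ sa
  obtain ⟨sa0, -, hmax⟩ :=
    Finset.exists_max_image (Finset.univ : Finset (S × A))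
      (fun sa => Qπ sa - Qstar sa) ⟨Classical.arbitrary _, Finset.mem_univ _⟩
  set M := Qπ sa0 - Qstar sa0 with hMdef
  have hM : ∀ sa, Qπ sa - Qstar sa ≤ M := fun sa => hmax sa (Finset.mem_univ _)
  -- softV inequality from hopt
  have hV : ∀ s, softV π Qstar s ≤ softV πstar Qstar s := by
    intro s
    have := hopt s π hπ
    simp only [softV]
    linarith
  -- Qstar is superharmonic for π
  have h2 : softBellman p r γ π Qstar sa0 ≤ Qstar sa0 := by
    rw [← hfix sa0]
    simp only [softBellman]
    have : ∑ s', (p sa0.1 sa0.2 s').toReal * softV π Qstar s'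
        ≤ ∑ s', (p sa0.1 sa0.2 s').toReal * softV πstar Qstar s' :=
      Finset.sum_le_sum fun s' _ =>
        mul_le_mul_of_nonneg_left (hV s') ENNReal.toReal_nonneg
    nlinarith
  have hVdiff : ∀ s', softV π Qπ s' - softV π Qstar s' ≤ M := by
    intro s'
    have heq : softV π Qπ s' - softV π Qstar s'
        = ∑ a, (π s' a).toReal * (Qπ (s', a) - Qstar (s', a)) := by
      simp only [softV, mul_sub, Finset.sum_sub_distrib]
      ring
    rw [heq]
    exact pmf_weighted_le _ _ _ fun a => hM (s', a)
  have key : M ≤ γ * M := by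
    have h1 : Qπ sa0 = softBellman p r γ π Qπ sa0 := (hfixπ sa0).symm
    have h3 : softBellman p r γ π Qπ sa0 - softBellman p r γ π Qstar sa0
        = γ * ∑ s', (p sa0.1 sa0.2 s').toReal
            * (softV π Qπ s' - softV π Qstar s') := by
      simp only [softBellman, mul_sub, Finset.sum_sub_distrib]
      ring
    have h4 : ∑ s', (p sa0.1 sa0.2 s').toReal
        * (softV π Qπ s' - softV π Qstar s') ≤ M :=
      pmf_weighted_le _ _ _ hVdiff
    have h5 : γ * ∑ s', (p sa0.1 sa0.2 s').toReal
        * (softV π Qπ s' - softV π Qstar s') ≤ γ * M :=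
      mul_le_mul_of_nonneg_left h4 hγ0
    linarith
  have hM0 : M ≤ 0 := by nlinarith
  linarith [hM sa]
end

section
/- Multivariate tanh change of variables: fix D ∈ ℕ and let f : (Fin D → ℝ) → ℝ≥0∞ be measurable, and let μ be the measure on Fin D → ℝ with density f with respect to Lebesgue (product volume) measure. Let T : (Fin D → ℝ) → (Fin D → ℝ) be the componentwise hyperbolic tangent, T(u) = (tanh(u₁), …, tanh(u_D)). Then the pushforward of μ under T has density a ↦ f(artanh ∘ a) · ∏_{i} (1 − a_i²)^{−1} on the open cube {a : ∀ i, −1 < a_i < 1} (and density 0 outside it) with respect to Lebesgue measure; equivalently, for u with a = T(u), the log-density satisfies log π(a) = log f(u) − ∑_{i=1}^{D} log(1 − tanh²(u_i)). -/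
open MeasureTheory
open scoped ENNReal

/-- The inverse of the hyperbolic tangent on `(-1, 1)`. -/
noncomputable def artanh (a : ℝ) : ℝ := Real.log ((1 + a) / (1 - a)) / 2


lemma hasDerivAt_tanh' (x : ℝ) : HasDerivAt Real.tanh (1 - Real.tanh x ^ 2) x := by
  have hc := Real.cosh_pos x
  have h := (Real.hasDerivAt_sinh x).div (Real.hasDerivAt_cosh x) hc.ne'
  have key : (Real.cosh x * Real.cosh x - Real.sinh x * Real.sinh x) / Real.cosh x ^ 2
      = 1 - Real.tanh x ^ 2 := by
    rw [Real.tanh_eq_sinh_div_cosh, div_pow]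
    have h2 := Real.cosh_sq_sub_sinh_sq x
    field_simp
  rw [← key]
  have heq : Real.tanh = fun y => Real.sinh y / Real.cosh y :=
    funext fun y => Real.tanh_eq_sinh_div_cosh y
  rw [heq]
  exact h

lemma tanh_mem_Ioo (x : ℝ) : Real.tanh x ∈ Set.Ioo (-1 : ℝ) 1 := by
  have hc := Real.cosh_pos x
  have h1 : Real.sinh x < Real.cosh x := by
    nlinarith [Real.cosh_sub_sinh x, Real.exp_pos (-x)]
  have h2 : -Real.cosh x < Real.sinh x := by
    nlinarith [Real.cosh_add_sinh x, Real.exp_pos x]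
  rw [Real.tanh_eq_sinh_div_cosh]
  constructor
  · rw [lt_div_iff₀ hc]; nlinarith
  · rw [div_lt_one hc]; exact h1

lemma ratio_tanh (u : ℝ) : (1 + Real.tanh u) / (1 - Real.tanh u) = Real.exp (2 * u) := by
  have hc := Real.cosh_pos u
  have ha := Real.cosh_add_sinh u
  have hs := Real.cosh_sub_sinh u
  have h2 : Real.exp (2 * u) = Real.exp u / Real.exp (-u) := by
    rw [← Real.exp_sub]; ring_nf
  rw [Real.tanh_eq_sinh_div_cosh, h2, ← ha, ← hs]
  have hne : Real.cosh u - Real.sinh u ≠ 0 := by rw [hs]; positivity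
  field_simp

lemma artanh_tanh (u : ℝ) : artanh (Real.tanh u) = u := by
  unfold artanh
  rw [ratio_tanh, Real.log_exp]
  ring

lemma tanh_artanh {a : ℝ} (ha : a ∈ Set.Ioo (-1 : ℝ) 1) : Real.tanh (artanh a) = a := by
  have h1 : (0:ℝ) < 1 + a := by linarith [ha.1]
  have h2 : (0:ℝ) < 1 - a := by linarith [ha.2]
  have key : Real.exp (2 * artanh a) = (1 + a) / (1 - a) := by
    unfold artanh
    rw [show 2 * (Real.log ((1 + a) / (1 - a)) / 2) = Real.log ((1 + a) / (1 - a)) by ring,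
      Real.exp_log (by positivity)]
  have h3 : Real.tanh (artanh a) = (Real.exp (2 * artanh a) - 1) / (Real.exp (2 * artanh a) + 1) := by
    set x := artanh a
    have he : Real.exp (-x) = (Real.exp x)⁻¹ := by rw [Real.exp_neg]
    have hx := Real.exp_pos x
    rw [Real.tanh_eq_sinh_div_cosh, Real.sinh_eq, Real.cosh_eq, he,
      show 2 * x = x + x by ring, Real.exp_add]
    field_simp
  rw [h3, key]
  field_simp
  ring

lemma det_pi_smul_proj {D : ℕ} (c : Fin D → ℝ) :
    (ContinuousLinearMap.pi (fun i => c i • ContinuousLinearMap.proj i) :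
      (Fin D → ℝ) →L[ℝ] (Fin D → ℝ)).det = ∏ i, c i := by
  have h : ((ContinuousLinearMap.pi (fun i => c i • ContinuousLinearMap.proj i) :
      (Fin D → ℝ) →L[ℝ] (Fin D → ℝ)) : (Fin D → ℝ) →ₗ[ℝ] (Fin D → ℝ))
      = Matrix.toLin' (Matrix.diagonal c) := by
    apply LinearMap.ext
    intro u
    funext i
    simp [Matrix.toLin'_apply, Matrix.mulVec_diagonal, mul_comm]
  rw [ContinuousLinearMap.det, h, LinearMap.det_toLin', Matrix.det_diagonal]

theorem tanh_multivariate_pushforward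
    (D : ℕ) (f : (Fin D → ℝ) → ℝ≥0∞) (hf : Measurable f) :
    (volume.withDensity f).map (fun u i => Real.tanh (u i))
      = volume.withDensity
          (Set.indicator {a : Fin D → ℝ | ∀ i, a i ∈ Set.Ioo (-1 : ℝ) 1}
            (fun a => f (fun i => artanh (a i))
              * ∏ i, (ENNReal.ofReal (1 - a i ^ 2))⁻¹)) := by
  set T : (Fin D → ℝ) → (Fin D → ℝ) := fun u i => Real.tanh (u i) with hTdef
  set A : Set (Fin D → ℝ) := {a | ∀ i, a i ∈ Set.Ioo (-1 : ℝ) 1} with hAdef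
  set g : (Fin D → ℝ) → ℝ≥0∞ := fun a => f (fun i => artanh (a i))
              * ∏ i, (ENNReal.ofReal (1 - a i ^ 2))⁻¹ with hgdef
  have htanh_cont : Continuous Real.tanh :=
    Differentiable.continuous fun x => (hasDerivAt_tanh' x).differentiableAt
  have hT_meas : Measurable T :=
    measurable_pi_lambda _ fun i => htanh_cont.measurable.comp (measurable_pi_apply i)
  have hA_meas : MeasurableSet A := by
    have : A = ⋂ i, (fun a : Fin D → ℝ => a i) ⁻¹' Set.Ioo (-1 : ℝ) 1 := by
      ext a; simp [hAdef]
    rw [this]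
    exact MeasurableSet.iInter fun i => (measurable_pi_apply i) measurableSet_Ioo
  set L : (Fin D → ℝ) → ((Fin D → ℝ) →L[ℝ] (Fin D → ℝ)) :=
    fun u => ContinuousLinearMap.pi
      (fun i => (1 - Real.tanh (u i) ^ 2) • ContinuousLinearMap.proj i) with hLdef
  have hDeriv : ∀ u, HasFDerivAt T (L u) u := by
    intro u
    rw [hasFDerivAt_pi']
    intro i
    rw [hLdef, ContinuousLinearMap.proj_pi]
    exact (hasDerivAt_tanh' (u i)).comp_hasFDerivAt (f := fun v : Fin D → ℝ => v i) u (hasFDerivAt_apply i u)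
  have hInj : Function.Injective T := by
    intro u v huv
    funext i
    have h1 : Real.tanh (u i) = Real.tanh (v i) := congrFun huv i
    have h2 : artanh (Real.tanh (u i)) = artanh (Real.tanh (v i)) := by rw [h1]
    rwa [artanh_tanh, artanh_tanh] at h2
  ext s hs
  rw [Measure.map_apply hT_meas hs, withDensity_apply _ (hT_meas hs), withDensity_apply _ hs]
  have hTs : MeasurableSet (T ⁻¹' s) := hT_meas hs
  have himg : A ∩ s = T '' (T ⁻¹' s) := by
    ext a
    constructor
    · rintro ⟨haA, has⟩
      have heq : T (fun i => artanh (a i)) = a := funext fun i => tanh_artanh (haA i)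
      exact ⟨fun i => artanh (a i), by rw [Set.mem_preimage, heq]; exact has, heq⟩
    · rintro ⟨u, hu, rfl⟩
      exact ⟨fun i => tanh_mem_Ioo (u i), hu⟩
  have hRHS : ∫⁻ a in s, Set.indicator A g a = ∫⁻ a in A ∩ s, g a := by
    rw [lintegral_indicator hA_meas, Measure.restrict_restrict hA_meas]
  rw [hRHS, himg,
    lintegral_image_eq_lintegral_abs_det_fderiv_mul volume hTs
      (fun x _ => (hDeriv x).hasFDerivWithinAt) (fun x _ y _ h => hInj h) g]
  refine lintegral_congr fun u => ?_
  have hpos : ∀ i : Fin D, 0 < 1 - Real.tanh (u i) ^ 2 := by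
    intro i
    have h := tanh_mem_Ioo (u i)
    nlinarith [h.1, h.2]
  have habs : |(L u).det| = ∏ i, (1 - Real.tanh (u i) ^ 2) := by
    rw [hLdef]
    rw [det_pi_smul_proj]
    exact abs_of_pos (Finset.prod_pos fun i _ => hpos i)
  have hgu : g (T u) = f u * ∏ i, (ENNReal.ofReal (1 - Real.tanh (u i) ^ 2))⁻¹ := by
    rw [hgdef]
    simp only [hTdef]
    congr 1
    congr 1
    funext i
    exact artanh_tanh (u i)
  rw [habs, hgu, ENNReal.ofReal_prod_of_nonneg (fun i _ => (hpos i).le)]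
  have hcancel : (∏ i, ENNReal.ofReal (1 - Real.tanh (u i) ^ 2))
      * ∏ i, (ENNReal.ofReal (1 - Real.tanh (u i) ^ 2))⁻¹ = 1 := by
    rw [← Finset.prod_mul_distrib]
    refine Finset.prod_eq_one fun i _ => ENNReal.mul_inv_cancel ?_ ENNReal.ofReal_ne_top
    exact (ENNReal.ofReal_pos.2 (hpos i)).ne'
  calc f u = f u * ((∏ i, ENNReal.ofReal (1 - Real.tanh (u i) ^ 2))
      * ∏ i, (ENNReal.ofReal (1 - Real.tanh (u i) ^ 2))⁻¹) := by rw [hcancel, mul_one]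
    _ = (∏ i, ENNReal.ofReal (1 - Real.tanh (u i) ^ 2))
      * (f u * ∏ i, (ENNReal.ofReal (1 - Real.tanh (u i) ^ 2))⁻¹) := by ring
end
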